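/- arXiv:1612.00943 — 2 statements merged into one kernel-verified Lean document; each statement's English description precedes it below -/
import Mathlib

section
/- Let G be a finite simple connected graph with A(G) ≠ ∅ and md(G*) = 0 (that is, D* = ∅). Then for every maximum matching M of G there exists a matching N of the induced subgraph G[D(G)] such that M ∪ N is an optimal matching cover of G (so M ∪ N covers V(G) and mc(G) = 2). -/
variable {V : Type*}

/-- The set of vertices covered by a set of edges. -/
def edgeCover (M : Finset (Sym2 V)) : Set V := {v | ∃ e ∈ M, v ∈ e}

/-- `M` is a matching of `G`: a set of pairwise disjoint edges of `G`. -/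
def IsMatchingSet (G : SimpleGraph V) (M : Finset (Sym2 V)) : Prop :=
  (∀ e ∈ M, e ∈ G.edgeSet) ∧
    ∀ e ∈ M, ∀ f ∈ M, e ≠ f → ∀ v : V, v ∈ e → v ∉ f

/-- `M` is a maximum matching of `G`. -/
def IsMaximumMatchingSet (G : SimpleGraph V) (M : Finset (Sym2 V)) : Prop :=
  IsMatchingSet G M ∧ ∀ N : Finset (Sym2 V), IsMatchingSet G N → N.card ≤ M.card

variable [Fintype V] [DecidableEq V]

/-- `M` is a `k`-matching cover of `G`: a union of `k` matchings of `G` covering `V(G)`. -/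
def IsKMatchingCover (G : SimpleGraph V) (k : ℕ) (M : Finset (Sym2 V)) : Prop :=
  (∃ f : Fin k → Finset (Sym2 V), (∀ i, IsMatchingSet G (f i)) ∧
      M = Finset.univ.biUnion f) ∧
    ∀ v : V, v ∈ edgeCover M

/-- The matching cover number `mc(G)`. -/
noncomputable def mc (G : SimpleGraph V) : ℕ :=
  sInf {k | ∃ M : Finset (Sym2 V), IsKMatchingCover G k M}

/-- `M` is a `k`-matching `D`-cover of `G`: a union of `k` matchings of `G` covering `D`. -/
def IsKMatchingDCover (G : SimpleGraph V) (D : Set V) (k : ℕ)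
    (M : Finset (Sym2 V)) : Prop :=
  (∃ f : Fin k → Finset (Sym2 V), (∀ i, IsMatchingSet G (f i)) ∧
      M = Finset.univ.biUnion f) ∧
    ∀ v ∈ D, v ∈ edgeCover M

/-- The matching `D`-cover number `md(G)`. -/
noncomputable def md (G : SimpleGraph V) (D : Set V) : ℕ :=
  sInf {k | ∃ M : Finset (Sym2 V), IsKMatchingDCover G D k M}

/-- The Gallai–Edmonds set `D(G)`: vertices missed by some maximum matching. -/
def Dset (G : SimpleGraph V) : Set V :=
  {v | ∃ M : Finset (Sym2 V), IsMaximumMatchingSet G M ∧ v ∉ edgeCover M}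

/-- The Gallai–Edmonds set `A(G) = N_G(D(G))`. -/
def Aset (G : SimpleGraph V) : Set V :=
  {v | v ∉ Dset G ∧ ∃ u ∈ Dset G, G.Adj u v}

/-- The Gallai–Edmonds set `C(G) = V(G) \ (A(G) ∪ D(G))`. -/
def Cset (G : SimpleGraph V) : Set V :=
  {v | v ∉ Dset G ∧ v ∉ Aset G}

/-- The induced subgraph `G[s]`, viewed as a graph on the same vertex type. -/
def indOn (G : SimpleGraph V) (s : Set V) : SimpleGraph V where
  Adj a b := a ∈ s ∧ b ∈ s ∧ G.Adj a b
  symm := ⟨by rintro a b ⟨ha, hb, h⟩; exact ⟨hb, ha, h.symm⟩⟩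
  loopless := ⟨by rintro a ⟨-, -, h⟩; exact G.loopless.irrefl a h⟩

/-- `D*`: the set of isolated vertices of `G[D(G)]`. -/
def DstarSet (G : SimpleGraph V) : Set V :=
  {v | v ∈ Dset G ∧ ∀ u : V, ¬ (indOn G (Dset G)).Adj v u}

/-- The bipartite graph `G*`, obtained from `G` by deleting the nontrivial components of
`G[D(G)]`, the vertices of `C(G)`, and the edges spanned by `A(G)`: its edges are exactly
the edges of `G` joining `A(G)` and `D*`. -/
def Gstar (G : SimpleGraph V) : SimpleGraph V where
  Adj a b := G.Adj a b ∧
    ((a ∈ Aset G ∧ b ∈ DstarSet G) ∨ (a ∈ DstarSet G ∧ b ∈ Aset G))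
  symm := ⟨by rintro a b ⟨h, hc⟩; exact ⟨h.symm, by tauto⟩⟩
  loopless := ⟨by rintro a ⟨h, -⟩; exact G.loopless.irrefl a h⟩

open Classical in
/-- The degree of `v` in the edge set `M`; this is the degree of `v` in `G[M]+A`
(vertices not covered by `M` have degree `0`). -/
noncomputable def degM (M : Finset (Sym2 V)) (v : V) : ℕ :=
  (M.filter fun e => v ∈ e).card

/-- The maximum degree `Δ(G[M]+A)`. -/
noncomputable def maxDegPlus (M : Finset (Sym2 V)) : ℕ :=
  Finset.univ.sup fun v : V => degM M v

/-- `w` is a maximum center of `M` (all vertices of `A` being regarded as centers). -/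
def IsMaximumCenter (A : Set V) (M : Finset (Sym2 V)) (w : V) : Prop :=
  w ∈ A ∧ degM M w = maxDegPlus M

/-- `(A, D)` is a bipartition of `G`. -/
def IsBipartition (G : SimpleGraph V) (A D : Set V) : Prop :=
  Disjoint A D ∧ A ∪ D = Set.univ ∧
    ∀ a b : V, G.Adj a b → (a ∈ A ∧ b ∈ D) ∨ (a ∈ D ∧ b ∈ A)

/-- A matching `D`-cover of `G`, recorded as an edge set
(a union of matchings of `G` covering `D`). -/
def IsMDCoverSet (G : SimpleGraph V) (D : Set V) (M : Finset (Sym2 V)) : Prop :=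
  ∃ k, IsKMatchingDCover G D k M

/-- A minimal matching `D`-cover: no proper subset is a matching `D`-cover. -/
def IsMinimalMDCover (G : SimpleGraph V) (D : Set V) (M : Finset (Sym2 V)) : Prop :=
  IsMDCoverSet G D M ∧ ∀ M' ⊂ M, ¬ IsMDCoverSet G D M'

/-- The graph `G[M]` spanned by an edge set, on the same vertex type. -/
def fromEdges (M : Finset (Sym2 V)) : SimpleGraph V where
  Adj a b := a ≠ b ∧ s(a, b) ∈ M
  symm := ⟨by rintro a b ⟨hne, h⟩; exact ⟨hne.symm, by rwa [Sym2.eq_swap]⟩⟩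
  loopless := ⟨by rintro a ⟨hne, -⟩; exact hne rfl⟩

/-- The connected component of `v` in `G[M]` is a star with center `c`:
every vertex of the component is `c` or a neighbour of `c`, and every edge of the
component is incident with `c`. -/
def StarCenteredAt (M : Finset (Sym2 V)) (c v : V) : Prop :=
  (fromEdges M).Reachable c v ∧
    (∀ u : V, (fromEdges M).Reachable u v → u = c ∨ (fromEdges M).Adj c u) ∧
    ∀ e ∈ M, (∃ x, x ∈ e ∧ (fromEdges M).Reachable x v) → c ∈ e

/-- Every component of `G[M]` is a star whose center lies in `A`. -/
def CentersInA (A : Set V) (M : Finset (Sym2 V)) : Prop :=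
  ∀ v ∈ edgeCover M, ∃ c ∈ A, StarCenteredAt M c v

/-- `w` is an `M`-switching path: an `M`-alternating path (starting at a maximum center
with an edge of `M`, vertices alternately centers in `A` and ends, edges alternately in
`M` and outside `M`) ending at a center `v` with `d(u) ≥ d(v) + 2`. -/
def IsSwitchingPath (G : SimpleGraph V) (A : Set V) (M : Finset (Sym2 V))
    (n : ℕ) (w : Fin (n + 1) → V) : Prop :=
  0 < n ∧ Function.Injective w ∧
    (∀ i : Fin n, G.Adj (w i.castSucc) (w i.succ)) ∧
    (∀ i : Fin n, (s(w i.castSucc, w i.succ) ∈ M ↔ Even (i : ℕ))) ∧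
    (∀ i : Fin (n + 1), w i ∈ A ↔ Even (i : ℕ)) ∧
    w (Fin.last n) ∈ A ∧
    IsMaximumCenter A M (w 0) ∧
    degM M (w (Fin.last n)) + 2 ≤ degM M (w 0)

/-- There is an `M`-switching path from `u` to `v` in `G`. -/
def ExistsSwitchingPath (G : SimpleGraph V) (A : Set V) (M : Finset (Sym2 V))
    (u v : V) : Prop :=
  ∃ (n : ℕ) (w : Fin (n + 1) → V),
    IsSwitchingPath G A M n w ∧ w 0 = u ∧ w (Fin.last n) = v

/-- The edge set of the path `w 0, w 1, …, w n`. -/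
def pathEdges (n : ℕ) (w : Fin (n + 1) → V) : Finset (Sym2 V) :=
  Finset.univ.image fun i : Fin n => s(w i.castSucc, w i.succ)


section MCAux
namespace Aux
variable [DecidableEq V]
variable {G : SimpleGraph V} {M N K L : Finset (Sym2 V)} {a b c d u v w x : V} {e f : Sym2 V}

lemma mem_cover {x : V} {M : Finset (Sym2 V)} : x ∈ edgeCover M ↔ ∃ e ∈ M, x ∈ e := Iff.rfl

lemma edge_unique (hM : IsMatchingSet G M) (he : e ∈ M) (hf : f ∈ M)
    (hv : v ∈ e) (hw : v ∈ f) : e = f := by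
  by_contra h; exact hM.2 e he f hf h v hv hw

lemma exists_partner (hM : IsMatchingSet G M) (h : v ∈ edgeCover M) :
    ∃ w, w ≠ v ∧ s(v, w) ∈ M := by
  obtain ⟨e, he, hve⟩ := h
  refine ⟨Sym2.Mem.other hve, Sym2.other_ne (G.not_isDiag_of_mem_edgeSet (hM.1 e he)) hve, ?_⟩
  rw [Sym2.other_spec hve]; exact he

lemma matching_subset (hNM : N ⊆ M) (hM : IsMatchingSet G M) : IsMatchingSet G N :=
  ⟨fun e he => hM.1 e (hNM he), fun e he f hf hne v hv => hM.2 e (hNM he) f (hNM hf) hne v hv⟩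

lemma matching_insert (hM : IsMatchingSet G M) (hG : s(a, b) ∈ G.edgeSet)
    (ha : a ∉ edgeCover M) (hb : b ∉ edgeCover M) :
    IsMatchingSet G (insert s(a, b) M) := by
  constructor
  · intro e he
    rcases Finset.mem_insert.mp he with h | h
    · exact h ▸ hG
    · exact hM.1 e h
  · intro e he f hf hne x hxe hxf
    rcases Finset.mem_insert.mp he with h | h <;> rcases Finset.mem_insert.mp hf with h' | h'
    · exact hne (h.trans h'.symm)
    · subst h
      rcases Sym2.mem_iff.mp hxe with rfl | rfl
      · exact ha ⟨f, h', hxf⟩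
      · exact hb ⟨f, h', hxf⟩
    · subst h'
      rcases Sym2.mem_iff.mp hxf with rfl | rfl
      · exact ha ⟨e, h, hxe⟩
      · exact hb ⟨e, h, hxe⟩
    · exact hM.2 e h f h' hne x hxe hxf

lemma cover_insert : x ∈ edgeCover (insert e M) ↔ x ∈ e ∨ x ∈ edgeCover M := by
  simp only [mem_cover, Finset.mem_insert]
  constructor
  · rintro ⟨f, rfl | hf, hx⟩
    · exact Or.inl hx
    · exact Or.inr ⟨f, hf, hx⟩
  · rintro (hx | ⟨f, hf, hx⟩)
    · exact ⟨e, Or.inl rfl, hx⟩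
    · exact ⟨f, Or.inr hf, hx⟩

lemma cover_mono (h : N ⊆ M) (hx : x ∈ edgeCover N) : x ∈ edgeCover M := by
  obtain ⟨e, he, hxe⟩ := hx; exact ⟨e, h he, hxe⟩

lemma not_cover_erase (hM : IsMatchingSet G M) (he : s(v, w) ∈ M) :
    v ∉ edgeCover (M.erase s(v, w)) ∧ w ∉ edgeCover (M.erase s(v, w)) := by
  constructor
  · rintro ⟨f, hf, hvf⟩
    exact Finset.ne_of_mem_erase hf
      (edge_unique hM (Finset.mem_of_mem_erase hf) he hvf (Sym2.mem_mk_left v w))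
  · rintro ⟨f, hf, hvf⟩
    exact Finset.ne_of_mem_erase hf
      (edge_unique hM (Finset.mem_of_mem_erase hf) he hvf (Sym2.mem_mk_right v w))

lemma maxcard (hM : IsMaximumMatchingSet G M) (hN : IsMaximumMatchingSet G N) :
    M.card = N.card := le_antisymm (hN.2 M hM.1) (hM.2 N hN.1)

lemma exposed_not_adj (hM : IsMaximumMatchingSet G M) (ha : a ∉ edgeCover M)
    (hb : b ∉ edgeCover M) (hab : G.Adj a b) : False := by
  have hne : s(a, b) ∉ M := fun h => ha ⟨_, h, Sym2.mem_mk_left a b⟩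
  have hmat := matching_insert hM.1 (G.mem_edgeSet.mpr hab) ha hb
  have := hM.2 _ hmat
  rw [Finset.card_insert_of_notMem hne] at this
  omega

lemma loop_lemma (G : SimpleGraph V) (M : Finset (Sym2 V))
    (hM : IsMaximumMatchingSet G M) (u : V) :
    ∀ n (K L : Finset (Sym2 V)) (a b : V), (M \ L).card = n →
    IsMatchingSet G K → K.card + 1 = M.card →
    (∀ x, x ∉ edgeCover M → x ∉ edgeCover K) → u ∉ edgeCover K → b ∉ edgeCover K →
    IsMatchingSet G L → L.card = M.card → a ∉ edgeCover L →
    s(a, b) ∈ G.edgeSet → a ≠ u → b ≠ u → b ∈ edgeCover M →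
    (∀ e ∈ L, u ∈ e → e ∈ M) →
    (∀ e ∈ M, e ∉ L → e ∈ K) →
    ∃ M'' t, IsMatchingSet G M'' ∧ M''.card = M.card ∧ u ∉ edgeCover M'' ∧
      ∀ x, x ∉ edgeCover M → x ≠ t → x ∉ edgeCover M'' := by
  intro n
  induction n using Nat.strong_induction_on with
  | _ n ih =>
  intro K L a b hn hK hKcard hKmiss huK hbK hL hLcard haL hGab hau hbu hbM hinvv hinvvi
  by_cases haM : a ∈ edgeCover M
  · -- Case 2
    obtain ⟨c, hca, hacM⟩ := exists_partner hM.1 haM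
    have hacnL : s(a, c) ∉ L := fun h => haL ⟨_, h, Sym2.mem_mk_left a c⟩
    have hacK : s(a, c) ∈ K := hinvvi _ hacM hacnL
    have hcK : c ∈ edgeCover K := ⟨_, hacK, Sym2.mem_mk_right a c⟩
    have hcu : c ≠ u := fun h => huK (h ▸ hcK)
    have hcb : c ≠ b := fun h => hbK (h ▸ hcK)
    by_cases hcL : c ∈ edgeCover L
    · -- Case 2b
      obtain ⟨d, hdc, hcdL⟩ := exists_partner hL hcL
      have hda : d ≠ a := fun h => haL ⟨_, hcdL, h ▸ Sym2.mem_mk_right c d⟩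
      have hcdnM : s(c, d) ∉ M := by
        intro h
        have := edge_unique hM.1 hacM h (Sym2.mem_mk_right a c) (Sym2.mem_mk_left c d)
        rcases Sym2.eq_iff.mp this with ⟨_, h2⟩ | ⟨h1, _⟩
        · exact hdc h2.symm
        · exact hda h1.symm
      have hdu : d ≠ u := fun h => hcdnM (hinvv _ hcdL (h ▸ Sym2.mem_mk_right c d))
      set K' : Finset (Sym2 V) := insert s(a, b) (K.erase s(a, c)) with hK'def
      set L' : Finset (Sym2 V) := insert s(a, c) (L.erase s(c, d)) with hL'def
      have hKe := matching_subset (Finset.erase_subset s(a, c) K) hK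
      have hLe := matching_subset (Finset.erase_subset s(c, d) L) hL
      have haKe : a ∉ edgeCover (K.erase s(a, c)) := (not_cover_erase hK hacK).1
      have hcKe : c ∉ edgeCover (K.erase s(a, c)) := (not_cover_erase hK hacK).2
      have hbKe : b ∉ edgeCover (K.erase s(a, c)) := fun h => hbK (cover_mono (Finset.erase_subset _ _) h)
      have hK' : IsMatchingSet G K' := matching_insert hKe hGab haKe hbKe
      have haLe : a ∉ edgeCover (L.erase s(c, d)) := fun h => haL (cover_mono (Finset.erase_subset _ _) h)
      have hcLe : c ∉ edgeCover (L.erase s(c, d)) := (not_cover_erase hL hcdL).1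
      have hdLe : d ∉ edgeCover (L.erase s(c, d)) := (not_cover_erase hL hcdL).2
      have hL' : IsMatchingSet G L' := matching_insert hLe (hM.1.1 _ hacM) haLe hcLe
      have habnKe : s(a, b) ∉ K.erase s(a, c) := fun h => hbKe ⟨_, h, Sym2.mem_mk_right a b⟩
      have hacnLe : s(a, c) ∉ L.erase s(c, d) := fun h => haLe ⟨_, h, Sym2.mem_mk_left a c⟩
      have hKpos : 0 < K.card := Finset.card_pos.mpr ⟨_, hacK⟩
      have hLpos : 0 < L.card := Finset.card_pos.mpr ⟨_, hcdL⟩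
      have hK'card : K'.card + 1 = M.card := by
        rw [hK'def, Finset.card_insert_of_notMem habnKe, Finset.card_erase_of_mem hacK]
        omega
      have hL'card : L'.card = M.card := by
        rw [hL'def, Finset.card_insert_of_notMem hacnLe, Finset.card_erase_of_mem hcdL]
        omega
      have hK'miss : ∀ x, x ∉ edgeCover M → x ∉ edgeCover K' := by
        intro x hx hx'
        rcases cover_insert.mp hx' with h | h
        · rcases Sym2.mem_iff.mp h with rfl | rfl
          · exact hx haM
          · exact hx hbM
        · exact hKmiss x hx (cover_mono (Finset.erase_subset _ _) h)
      have huK' : u ∉ edgeCover K' := by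
        intro h
        rcases cover_insert.mp h with h | h
        · rcases Sym2.mem_iff.mp h with rfl | rfl
          · exact hau rfl
          · exact hbu rfl
        · exact huK (cover_mono (Finset.erase_subset _ _) h)
      have hcK' : c ∉ edgeCover K' := by
        intro h
        rcases cover_insert.mp h with h | h
        · rcases Sym2.mem_iff.mp h with h | h
          · exact hca h
          · exact hcb h
        · exact hcKe h
      have hdL' : d ∉ edgeCover L' := by
        intro h
        rcases cover_insert.mp h with h | h
        · rcases Sym2.mem_iff.mp h with h | h
          · exact hda h
          · exact hdc h
        · exact hdLe h
      have hGdc : s(d, c) ∈ G.edgeSet := by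
        rw [Sym2.eq_swap]; exact hL.1 _ hcdL
      have hcM : c ∈ edgeCover M := ⟨_, hacM, Sym2.mem_mk_right a c⟩
      have hinvv' : ∀ e ∈ L', u ∈ e → e ∈ M := by
        intro e he hue
        rcases Finset.mem_insert.mp he with rfl | he'
        · rcases Sym2.mem_iff.mp hue with h | h
          · exact absurd h.symm hau
          · exact absurd h.symm hcu
        · exact hinvv e (Finset.mem_of_mem_erase he') hue
      have hinvvi' : ∀ e ∈ M, e ∉ L' → e ∈ K' := by
        intro e heM heL'
        have hene : e ≠ s(a, c) := fun h => heL' (h ▸ Finset.mem_insert_self _ _)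
        have henL : e ∉ L := by
          intro h
          have : e ≠ s(c, d) := fun h' => hcdnM (h' ▸ heM)
          exact heL' (Finset.mem_insert_of_mem (Finset.mem_erase.mpr ⟨this, h⟩))
        exact Finset.mem_insert_of_mem (Finset.mem_erase.mpr ⟨hene, hinvvi e heM henL⟩)
      have hmeasure : (M \ L') = (M \ L).erase s(a, c) := by
        ext e
        simp only [Finset.mem_erase, Finset.mem_sdiff, hL'def, Finset.mem_insert]
        constructor
        · rintro ⟨heM, heL'⟩
          refine ⟨fun h => heL' (Or.inl h), heM, fun h => ?_⟩
          have : e ≠ s(c, d) := fun h' => hcdnM (h' ▸ heM)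
          exact heL' (Or.inr ⟨this, h⟩)
        · rintro ⟨hene, heM, henL⟩
          exact ⟨heM, fun h => by
            rcases h with h | h
            · exact hene h
            · exact henL h.2⟩
      have hacML : s(a, c) ∈ M \ L := Finset.mem_sdiff.mpr ⟨hacM, hacnL⟩
      have hlt : (M \ L').card < n := by
        rw [hmeasure, Finset.card_erase_of_mem hacML, ← hn]
        have : 0 < (M \ L).card := Finset.card_pos.mpr ⟨_, hacML⟩
        omega
      exact ih _ hlt K' L' d c rfl hK' hK'card hK'miss huK' hcK' hL' hL'card hdL'
        hGdc hdu hcu hcM hinvv' hinvvi'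
    · -- Case 2a: augment L, contradiction
      exfalso
      have hmat := matching_insert hL (hM.1.1 _ hacM) haL hcL
      have := hM.2 _ hmat
      rw [Finset.card_insert_of_notMem hacnL] at this
      omega
  · -- Case 1: finish
    refine ⟨insert s(a, b) K, a, matching_insert hK hGab (hKmiss a haM) hbK, ?_, ?_, ?_⟩
    · rw [Finset.card_insert_of_notMem (fun h => hbK ⟨_, h, Sym2.mem_mk_right a b⟩)]
      exact hKcard
    · intro h
      rcases cover_insert.mp h with h | h
      · rcases Sym2.mem_iff.mp h with h | h
        · exact hau h.symm
        · exact hbu h.symm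
      · exact huK h
    · intro x hx hxa h
      rcases cover_insert.mp h with h | h
      · rcases Sym2.mem_iff.mp h with h | h
        · exact hxa h
        · exact hx (h ▸ hbM)
      · exact hKmiss x hx h
lemma max_of_card (hM : IsMaximumMatchingSet G M) (hN : IsMatchingSet G N)
    (h : N.card = M.card) : IsMaximumMatchingSet G N :=
  ⟨hN, fun P hP => (hM.2 P hP).trans_eq h.symm⟩

lemma dset_exchange (hM : IsMaximumMatchingSet G M)
    (hu : ∃ M' : Finset (Sym2 V), IsMaximumMatchingSet G M' ∧ u ∉ edgeCover M') :
    ∃ M'' t, IsMatchingSet G M'' ∧ M''.card = M.card ∧ u ∉ edgeCover M'' ∧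
      ∀ x, x ∉ edgeCover M → x ≠ t → x ∉ edgeCover M'' := by
  obtain ⟨M', hM', huM'⟩ := hu
  by_cases huM : u ∈ edgeCover M
  · obtain ⟨x1, hx1u, hux1M⟩ := exists_partner hM.1 huM
    have hx1M' : x1 ∈ edgeCover M' := by
      by_contra h
      exact exposed_not_adj hM' (fun hh => huM' hh) h (G.mem_edgeSet.mp (hM.1.1 _ hux1M))
    obtain ⟨x2, hx2x1, hx1x2M'⟩ := exists_partner hM'.1 hx1M'
    have hx2u : x2 ≠ u := fun h => huM' ⟨_, hx1x2M', h ▸ Sym2.mem_mk_right x1 x2⟩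
    have hcards : M'.card = M.card := maxcard hM' hM
    have hMpos : 0 < M.card := Finset.card_pos.mpr ⟨_, hux1M⟩
    have hM'pos : 0 < M'.card := Finset.card_pos.mpr ⟨_, hx1x2M'⟩
    have hKe := matching_subset (Finset.erase_subset s(u, x1) M) hM.1
    have hL'e := matching_subset (Finset.erase_subset s(x1, x2) M') hM'.1
    have hux1nM' : s(u, x1) ∉ M'.erase s(x1, x2) := fun h =>
      huM' ⟨_, Finset.mem_of_mem_erase h, Sym2.mem_mk_left u x1⟩
    refine loop_lemma G M hM u _ (M.erase s(u, x1))
      (insert s(u, x1) (M'.erase s(x1, x2))) x2 x1 rfl hKe ?_ ?_ ?_ ?_ ?_ ?_ ?_ ?_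
      hx2u hx1u ⟨_, hux1M, Sym2.mem_mk_right u x1⟩ ?_ ?_
    · rw [Finset.card_erase_of_mem hux1M]; omega
    · exact fun x hx h => hx (cover_mono (Finset.erase_subset _ _) h)
    · exact (not_cover_erase hM.1 hux1M).1
    · exact (not_cover_erase hM.1 hux1M).2
    · exact matching_insert hL'e (hM.1.1 _ hux1M)
        (fun h => huM' (cover_mono (Finset.erase_subset _ _) h))
        (not_cover_erase hM'.1 hx1x2M').1
    · rw [Finset.card_insert_of_notMem hux1nM', Finset.card_erase_of_mem hx1x2M']
      omega
    · intro h
      rcases cover_insert.mp h with h | h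
      · rcases Sym2.mem_iff.mp h with h | h
        · exact hx2u h
        · exact hx2x1 h
      · exact (not_cover_erase hM'.1 hx1x2M').2 h
    · rw [Sym2.eq_swap]; exact hM'.1.1 _ hx1x2M'
    · intro e he hue
      rcases Finset.mem_insert.mp he with rfl | he'
      · exact hux1M
      · exact absurd ⟨_, Finset.mem_of_mem_erase he', hue⟩ huM'
    · intro e heM heL
      exact Finset.mem_erase.mpr ⟨fun h => heL (h ▸ Finset.mem_insert_self _ _), heM⟩
  · exact ⟨M, u, hM.1, rfl, huM, fun x hx _ => hx⟩

lemma no_common_neighbor (hM : IsMaximumMatchingSet G M)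
    (hv : v ∉ edgeCover M) (hv' : v' ∉ edgeCover M) (hne : v ≠ v')
    (hu : ∃ M' : Finset (Sym2 V), IsMaximumMatchingSet G M' ∧ u ∉ edgeCover M')
    (h1 : G.Adj u v) (h2 : G.Adj u v') : False := by
  obtain ⟨M'', t, hM''m, hM''card, huM'', hmiss⟩ := dset_exchange hM hu
  have hM''max : IsMaximumMatchingSet G M'' := max_of_card hM hM''m hM''card
  by_cases hvt : v = t
  · have hv't : v' ≠ t := fun h => hne (hvt.trans h.symm)
    exact exposed_not_adj hM''max huM'' (hmiss v' hv' hv't) h2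
  · exact exposed_not_adj hM''max huM'' (hmiss v hv hvt) h1

lemma build_N {G : SimpleGraph V} {M : Finset (Sym2 V)} (hM : IsMaximumMatchingSet G M)
    (hD : ∀ v, v ∉ edgeCover M → ∃ u, (indOn G (Dset G)).Adj v u) :
    ∀ s : Finset V, (∀ v ∈ s, v ∉ edgeCover M) →
      ∃ N, IsMatchingSet (indOn G (Dset G)) N ∧ (∀ v ∈ s, v ∈ edgeCover N) ∧
        ∀ e ∈ N, ∃ p q : V, e = s(p, q) ∧ p ∈ s ∧ q ∈ edgeCover M := by
  intro s
  induction s using Finset.induction_on with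
  | empty =>
    intro _
    exact ⟨∅, ⟨fun e he => absurd he (Finset.notMem_empty e),
      fun e he => absurd he (Finset.notMem_empty e)⟩,
      fun v hv => absurd hv (Finset.notMem_empty v),
      fun e he => absurd he (Finset.notMem_empty e)⟩
  | @insert v₀ s hv₀s ih =>
    intro hs
    obtain ⟨N', hN'm, hN'cov, hN'str⟩ := ih (fun v hv => hs v (Finset.mem_insert_of_mem hv))
    have hv₀ : v₀ ∉ edgeCover M := hs v₀ (Finset.mem_insert_self v₀ s)
    obtain ⟨u, hadj⟩ := hD v₀ hv₀
    have huDset : u ∈ Dset G := hadj.2.1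
    have hGv₀u : G.Adj v₀ u := hadj.2.2
    have huM : u ∈ edgeCover M := by
      by_contra h
      exact exposed_not_adj hM hv₀ h hGv₀u
    have hv₀N' : v₀ ∉ edgeCover N' := by
      rintro ⟨e, he, hve⟩
      obtain ⟨p, q, rfl, hps, hqM⟩ := hN'str e he
      rcases Sym2.mem_iff.mp hve with rfl | rfl
      · exact hv₀s hps
      · exact hv₀ hqM
    by_cases huN' : u ∈ edgeCover N'
    · exfalso
      obtain ⟨e, he, hue⟩ := huN'
      obtain ⟨p, q, rfl, hps, hqM⟩ := hN'str e he
      have hpM : p ∉ edgeCover M := hs p (Finset.mem_insert_of_mem hps)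
      have hup : u = q := by
        rcases Sym2.mem_iff.mp hue with rfl | rfl
        · exact absurd huM hpM
        · rfl
      subst hup
      have hpu : (indOn G (Dset G)).Adj p u :=
        (SimpleGraph.mem_edgeSet _).mp (hN'm.1 _ he)
      have hne : v₀ ≠ p := fun h => hv₀s (h ▸ hps)
      exact no_common_neighbor hM hv₀ hpM hne huDset hGv₀u.symm hpu.2.2.symm
    · refine ⟨insert s(v₀, u) N', ?_, ?_, ?_⟩
      · exact matching_insert hN'm ((SimpleGraph.mem_edgeSet _).mpr hadj) hv₀N' huN'
      · intro v hv
        rcases Finset.mem_insert.mp hv with rfl | hv'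
        · exact ⟨_, Finset.mem_insert_self _ _, Sym2.mem_mk_left v u⟩
        · exact cover_mono (Finset.subset_insert _ _) (hN'cov v hv')
      · intro e he
        rcases Finset.mem_insert.mp he with rfl | he'
        · exact ⟨v₀, u, rfl, Finset.mem_insert_self _ _, huM⟩
        · obtain ⟨p, q, rfl, hps, hqM⟩ := hN'str e he'
          exact ⟨p, q, rfl, Finset.mem_insert_of_mem hps, hqM⟩

lemma cover_ncard {G : SimpleGraph V} {M : Finset (Sym2 V)} (hM : IsMatchingSet G M) :
    (edgeCover M).ncard = 2 * M.card := by
  classical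
  have heq : edgeCover M = ↑(M.biUnion fun e => Finset.univ.filter (· ∈ e)) := by
    ext x
    simp only [mem_cover, Finset.coe_biUnion, Set.mem_iUnion, Finset.mem_coe,
      Finset.mem_filter, Finset.mem_univ, true_and]
    constructor
    · rintro ⟨e, he, hx⟩; exact ⟨e, he, hx⟩
    · rintro ⟨e, he, hx⟩; exact ⟨e, he, hx⟩
  rw [heq, Set.ncard_coe_finset]
  rw [Finset.card_biUnion]
  · rw [Finset.sum_congr rfl (g := fun _ => 2), Finset.sum_const, smul_eq_mul, mul_comm]
    intro e he
    have hne : ¬ e.IsDiag := G.not_isDiag_of_mem_edgeSet (hM.1 e he)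
    induction e using Sym2.ind with
    | _ x y =>
      have hxy : x ≠ y := fun h => hne (by simp [h, Sym2.isDiag_iff_proj_eq])
      have : Finset.univ.filter (· ∈ s(x, y)) = {x, y} := by
        ext z
        simp [Sym2.mem_iff, Finset.mem_insert, Finset.mem_singleton]
      rw [this, Finset.card_insert_of_notMem (by simpa using hxy), Finset.card_singleton]
  · intro e he f hf hef
    rw [Function.onFun, Finset.disjoint_left]
    intro x hx hx'
    exact hM.2 e he f hf hef x (Finset.mem_filter.mp hx).2 (Finset.mem_filter.mp hx').2

lemma dstar_empty (G : SimpleGraph V) (hconn : G.Connected) (hA : (Aset G).Nonempty)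
    (hmd : md (Gstar G) (DstarSet G) = 0) : DstarSet G = ∅ := by
  classical
  by_contra h
  obtain ⟨v₀, hv₀⟩ := Set.nonempty_iff_ne_empty.mpr h
  have hnb : ∀ w, w ∈ DstarSet G → ∃ x, (Gstar G).Adj w x := by
    intro w hw
    obtain ⟨a, haD, u₀, hu₀D, hadj0⟩ := hA
    have hz : ∃ z, z ≠ w := by
      by_cases haw : a = w
      · exact ⟨u₀, fun hh => haD (haw ▸ hh ▸ hu₀D)⟩
      · exact ⟨a, haw⟩
    obtain ⟨z, hzw⟩ := hz
    obtain ⟨p⟩ := hconn.preconnected w z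
    cases p with
    | nil => exact absurd rfl hzw
    | @cons _ y _ hadj _ =>
      have hyD : y ∉ Dset G := fun hh => hw.2 y ⟨hw.1, hh, hadj⟩
      exact ⟨y, hadj, Or.inr ⟨hw, hyD, w, hw.1, hadj⟩⟩
  have hSne : {k | ∃ N : Finset (Sym2 V),
      IsKMatchingDCover (Gstar G) (DstarSet G) k N}.Nonempty := by
    choose nbr hnbr using hnb
    set t : Finset V := (Set.toFinite (DstarSet G)).toFinset with ht
    have hmemt : ∀ w, w ∈ t ↔ w ∈ DstarSet G := fun w => Set.Finite.mem_toFinset _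
    let f : Fin t.card → Finset (Sym2 V) := fun i =>
      {s(((t.equivFin.symm i : t) : V),
        nbr _ ((hmemt _).mp (t.equivFin.symm i).2))}
    refine ⟨t.card, Finset.univ.biUnion f, ⟨f, ?_, rfl⟩, ?_⟩
    · intro i
      constructor
      · intro e he
        rw [Finset.mem_singleton] at he
        subst he
        exact (SimpleGraph.mem_edgeSet _).mpr (hnbr _ _)
      · intro e he g hg hne
        rw [Finset.mem_singleton] at he hg
        exact absurd (he.trans hg.symm) hne
    · intro v hv
      have hvt : v ∈ t := (hmemt v).mpr hv
      refine ⟨s(((t.equivFin.symm (t.equivFin ⟨v, hvt⟩) : t) : V),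
        nbr _ ((hmemt _).mp (t.equivFin.symm (t.equivFin ⟨v, hvt⟩)).2)), ?_, ?_⟩
      · exact Finset.mem_biUnion.mpr ⟨t.equivFin ⟨v, hvt⟩, Finset.mem_univ _,
          Finset.mem_singleton_self _⟩
      · rw [Equiv.symm_apply_apply]
        exact Sym2.mem_mk_left _ _
  have h0 := Nat.sInf_mem hSne
  rw [show sInf {k | ∃ N : Finset (Sym2 V),
      IsKMatchingDCover (Gstar G) (DstarSet G) k N} = md (Gstar G) (DstarSet G) from rfl,
    hmd] at h0
  obtain ⟨N0, ⟨f0, -, hN0⟩, hcov⟩ := h0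
  have : N0 = ∅ := by
    rw [hN0, Finset.univ_eq_empty]; simp
  obtain ⟨e, he, -⟩ := hcov v₀ hv₀
  rw [this] at he
  exact absurd he (Finset.notMem_empty e)

end Aux
end MCAux

/-- If `A(G) ≠ ∅` and `md(G*) = 0`, then for every maximum matching `M` of `G`
there is a matching `N` of `G[D(G)]` such that `M ∪ N` is an optimal matching cover of `G`
(it covers `V(G)` and `mc(G) = 2`). -/
theorem optimal_cover_of_md_eq_zero (G : SimpleGraph V) (hconn : G.Connected)
    (hA : (Aset G).Nonempty) (hmd : md (Gstar G) (DstarSet G) = 0)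
    (M : Finset (Sym2 V)) (hM : IsMaximumMatchingSet G M) :
    ∃ N : Finset (Sym2 V), IsMatchingSet (indOn G (Dset G)) N ∧
      (∀ v : V, v ∈ edgeCover (M ∪ N)) ∧ mc G = 2 := by
  classical
  have hDe : DstarSet G = ∅ := Aux.dstar_empty G hconn hA hmd
  have hD : ∀ v, v ∉ edgeCover M → ∃ u, (indOn G (Dset G)).Adj v u := by
    intro v hv
    by_contra h
    push_neg at h
    have hmem : v ∈ DstarSet G := ⟨⟨M, hM, hv⟩, h⟩
    rw [hDe] at hmem
    exact hmem
  obtain ⟨N, hNm, hNcov, -⟩ := Aux.build_N hM hD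
    (Finset.univ.filter (fun v => v ∉ edgeCover M))
    (fun v hv => (Finset.mem_filter.mp hv).2)
  have hNG : IsMatchingSet G N := by
    refine ⟨fun e he => ?_, hNm.2⟩
    induction e using Sym2.ind with
    | _ x y =>
      exact (SimpleGraph.mem_edgeSet _).mpr
        ((SimpleGraph.mem_edgeSet _).mp (hNm.1 _ he)).2.2
  have hcover : ∀ v : V, v ∈ edgeCover (M ∪ N) := by
    intro v
    by_cases hv : v ∈ edgeCover M
    · obtain ⟨e, he, hve⟩ := hv
      exact ⟨e, Finset.mem_union_left _ he, hve⟩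
    · obtain ⟨e, he, hve⟩ := hNcov v (Finset.mem_filter.mpr ⟨Finset.mem_univ v, hv⟩)
      exact ⟨e, Finset.mem_union_right _ he, hve⟩
  refine ⟨N, hNm, hcover, ?_⟩
  have h2S : IsKMatchingCover G 2 (M ∪ N) := by
    refine ⟨⟨fun i => if i = 0 then M else N, ?_, ?_⟩, hcover⟩
    · intro i
      dsimp only
      split
      · exact hM.1
      · exact hNG
    · ext e
      simp only [Finset.mem_union, Finset.mem_biUnion, Finset.mem_univ, true_and]
      constructor
      · rintro (h | h)
        · exact ⟨0, by simpa using h⟩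
        · exact ⟨1, by simpa using h⟩
      · rintro ⟨i, hi⟩
        fin_cases i
        · simp only [if_pos rfl] at hi; exact Or.inl hi
        · simp only [show (1 : Fin 2) ≠ 0 by decide, if_neg] at hi
          exact Or.inr hi
  have h2mem : (2 : ℕ) ∈ {k | ∃ P : Finset (Sym2 V), IsKMatchingCover G k P} :=
    ⟨M ∪ N, h2S⟩
  have h0 : (0 : ℕ) ∉ {k | ∃ P : Finset (Sym2 V), IsKMatchingCover G k P} := by
    rintro ⟨P, ⟨f, -, hP⟩, hcov'⟩
    obtain ⟨a, -⟩ := hA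
    obtain ⟨e, he, -⟩ := hcov' a
    rw [hP, Finset.univ_eq_empty] at he
    simp at he
  have h1 : (1 : ℕ) ∉ {k | ∃ P : Finset (Sym2 V), IsKMatchingCover G k P} := by
    rintro ⟨P, ⟨f, hf, hP⟩, hcov'⟩
    have hPf : P = f 0 := by
      rw [hP]
      ext e
      simp only [Finset.mem_biUnion, Finset.mem_univ, true_and]
      exact ⟨fun ⟨i, hi⟩ => by rwa [Subsingleton.elim i 0] at hi, fun h => ⟨0, h⟩⟩
    have hPmat : IsMatchingSet G P := hPf ▸ hf 0
    obtain ⟨a, -, u₀, hu₀, -⟩ := hA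
    obtain ⟨M₀, hM₀, hu₀M₀⟩ := hu₀
    have c1 : (edgeCover P).ncard = 2 * P.card := Aux.cover_ncard hPmat
    have c2 : edgeCover P = Set.univ := Set.eq_univ_of_forall hcov'
    have c3 : (edgeCover M₀).ncard = 2 * M₀.card := Aux.cover_ncard hM₀.1
    have c4 : edgeCover M₀ ⊆ Set.univ \ {u₀} := by
      intro x hx
      refine ⟨Set.mem_univ x, fun hh => ?_⟩
      rw [Set.mem_singleton_iff] at hh
      exact hu₀M₀ (hh ▸ hx)
    have c5 : (Set.univ \ {u₀} : Set V).ncard = (Set.univ : Set V).ncard - 1 :=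
      Set.ncard_diff_singleton_of_mem (Set.mem_univ u₀)
    have c6 : (edgeCover M₀).ncard ≤ (Set.univ \ {u₀} : Set V).ncard :=
      Set.ncard_le_ncard c4 (Set.toFinite _)
    have c7 : (Set.univ : Set V).ncard = Fintype.card V := by
      rw [Set.ncard_univ, Nat.card_eq_fintype_card]
    have c8 : P.card ≤ M₀.card := hM₀.2 P hPmat
    have hpos : 0 < Fintype.card V := Fintype.card_pos_iff.mpr ⟨u₀⟩
    rw [c2, c7] at c1
    rw [c5, c7] at c6
    rw [c3] at c6
    omega
  have hmem := Nat.sInf_mem ⟨2, h2mem⟩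
  have hle := Nat.sInf_le h2mem
  show sInf {k | ∃ P : Finset (Sym2 V), IsKMatchingCover G k P} = 2
  set m := sInf {k | ∃ P : Finset (Sym2 V), IsKMatchingCover G k P} with hm
  interval_cases m
  · exact absurd hmem h0
  · exact absurd hmem h1
  · rfl
end

section
/- Let G* be a finite simple bipartite graph with bipartition (A, D*), let M_c be a minimal matching D*-cover of G* whose centers are all in A, and let P_uv be an M_c-switching path in G* from u to v. Then the symmetric difference M_c' = M_c Δ E(P_uv) is again a minimal matching D*-cover of G* with the same centers as M_c; moreover, d_{G*[M_c']+A}(u) = d_{G*[M_c]+A}(u) − 1, d_{G*[M_c']+A}(v) = d_{G*[M_c]+A}(v) + 1, and d_{G*[M_c']+A}(w) = d_{G*[M_c]+A}(w) for every other center w. -/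
variable {V : Type*}

variable [Fintype V] [DecidableEq V]

open Classical in
lemma degM_eq (M : Finset (Sym2 V)) (v : V) : degM M v = (M.filter fun e => v ∈ e).card := rfl

lemma singleton_matching (G : SimpleGraph V) {e : Sym2 V} (he : e ∈ G.edgeSet) :
    IsMatchingSet G {e} := by
  constructor
  · intro e' he'; simp only [Finset.mem_singleton] at he'; subst he'; exact he
  · intro e' he' f hf hne
    simp only [Finset.mem_singleton] at he' hf
    subst he'; subst hf; exact absurd rfl hne

lemma isMDCoverSet_iff {G : SimpleGraph V} {D : Set V} {M : Finset (Sym2 V)} :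
    IsMDCoverSet G D M ↔ (∀ e ∈ M, e ∈ G.edgeSet) ∧ ∀ v ∈ D, v ∈ edgeCover M := by
  constructor
  · rintro ⟨k, ⟨f, hf, rfl⟩, hcov⟩
    refine ⟨?_, hcov⟩
    intro e he
    simp only [Finset.mem_biUnion, Finset.mem_univ, true_and] at he
    obtain ⟨i, hi⟩ := he
    exact (hf i).1 e hi
  · rintro ⟨hsub, hcov⟩
    refine ⟨M.card, ⟨fun i => {(M.equivFin.symm i : Sym2 V)}, ?_, ?_⟩, hcov⟩
    · intro i; exact singleton_matching G (hsub _ (M.equivFin.symm i).2)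
    · ext e
      simp only [Finset.mem_biUnion, Finset.mem_univ, true_and, Finset.mem_singleton]
      constructor
      · intro he; exact ⟨M.equivFin ⟨e, he⟩, by simp⟩
      · rintro ⟨i, hi⟩
        rw [hi]; exact (M.equivFin.symm i).2

lemma private_of_minimal {G : SimpleGraph V} {D : Set V} {M : Finset (Sym2 V)}
    (hmin : IsMinimalMDCover G D M) :
    ∀ e ∈ M, ∃ v ∈ D, v ∈ e ∧ ∀ e' ∈ M, v ∈ e' → e' = e := by
  obtain ⟨hcov, hmins⟩ := hmin
  rw [isMDCoverSet_iff] at hcov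
  intro e he
  have hnc := hmins _ (Finset.erase_ssubset he)
  have hP : ∀ e' ∈ M.erase e, e' ∈ G.edgeSet := fun e' he' => hcov.1 e' (Finset.mem_of_mem_erase he')
  have hQ : ¬ ∀ v ∈ D, v ∈ edgeCover (M.erase e) := fun h => hnc (isMDCoverSet_iff.mpr ⟨hP, h⟩)
  push_neg at hQ
  obtain ⟨v, hvD, hv⟩ := hQ
  obtain ⟨e0, he0, hve0⟩ := hcov.2 v hvD
  have he0e : e0 = e := by
    by_contra hne
    exact hv ⟨e0, Finset.mem_erase.mpr ⟨hne, he0⟩, hve0⟩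
  subst he0e
  refine ⟨v, hvD, hve0, ?_⟩
  intro e' he' hve'
  by_contra hne
  exact hv ⟨e', Finset.mem_erase.mpr ⟨hne, he'⟩, hve'⟩

lemma minimal_of_private {G : SimpleGraph V} {D : Set V} {M : Finset (Sym2 V)}
    (hsub : ∀ e ∈ M, e ∈ G.edgeSet) (hcov : ∀ v ∈ D, v ∈ edgeCover M)
    (hpriv : ∀ e ∈ M, ∃ v ∈ D, v ∈ e ∧ ∀ e' ∈ M, v ∈ e' → e' = e) :
    IsMinimalMDCover G D M := by
  refine ⟨isMDCoverSet_iff.mpr ⟨hsub, hcov⟩, ?_⟩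
  intro M' hM' hcov'
  rw [isMDCoverSet_iff] at hcov'
  obtain ⟨e, heM, heM'⟩ := Finset.exists_of_ssubset hM'
  obtain ⟨v, hvD, hve, huniq⟩ := hpriv e heM
  obtain ⟨e', he', hve'⟩ := hcov'.2 v hvD
  exact heM' (huniq e' (hM'.1 he') hve' ▸ he')

lemma exists_AD {G : SimpleGraph V} {A D : Set V} (hbip : IsBipartition G A D)
    {e : Sym2 V} (he : e ∈ G.edgeSet) :
    ∃ a b, e = s(a, b) ∧ a ≠ b ∧ a ∈ A ∧ b ∈ D := by
  induction e using Sym2.ind with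
  | _ x y =>
    rw [SimpleGraph.mem_edgeSet] at he
    rcases hbip.2.2 x y he with ⟨hx, hy⟩ | ⟨hx, hy⟩
    · exact ⟨x, y, rfl, he.ne, hx, hy⟩
    · exact ⟨y, x, Sym2.eq_swap, he.ne.symm, hy, hx⟩

lemma unique_D_mem {G : SimpleGraph V} {A D : Set V} (hbip : IsBipartition G A D)
    {e : Sym2 V} (he : e ∈ G.edgeSet) {x y : V} (hx : x ∈ e) (hy : y ∈ e)
    (hxD : x ∈ D) (hyD : y ∈ D) : x = y := by
  obtain ⟨a, b, rfl, -, haA, hbD⟩ := exists_AD hbip he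
  rw [Sym2.mem_iff] at hx hy
  have hdisj := Set.disjoint_left.mp hbip.1
  rcases hx with rfl | rfl
  · exact absurd hxD (hdisj haA)
  · rcases hy with rfl | rfl
    · exact absurd hyD (hdisj haA)
    · rfl

/-- every covered D-vertex has a unique edge through it. -/
lemma unique_edge {D : Set V} {M : Finset (Sym2 V)}
    (hdeg : ∀ d ∈ D, degM M d ≤ 1) {x : V} (hxD : x ∈ D)
    {e1 e2 : Sym2 V} (h1 : e1 ∈ M) (h2 : e2 ∈ M) (hx1 : x ∈ e1) (hx2 : x ∈ e2) :
    e1 = e2 := by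
  classical
  have := hdeg x hxD
  rw [degM_eq, Finset.card_le_one] at this
  exact this e1 (Finset.mem_filter.mpr ⟨h1, hx1⟩) e2 (Finset.mem_filter.mpr ⟨h2, hx2⟩)

lemma centersInA_of_deg_le_one {G : SimpleGraph V} {A D : Set V}
    (hbip : IsBipartition G A D) {M : Finset (Sym2 V)}
    (hsub : ∀ e ∈ M, e ∈ G.edgeSet) (hdeg : ∀ d ∈ D, degM M d ≤ 1) :
    CentersInA A M := by
  have hstep : ∀ c ∈ A, ∀ u x : V, (u = c ∨ (fromEdges M).Adj c u) →
      (fromEdges M).Adj u x → (x = c ∨ (fromEdges M).Adj c x) := by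
    intro c hc u x hu hadj
    rcases hu with rfl | hcu
    · exact Or.inr hadj
    · left
      obtain ⟨hne, hmem⟩ := hcu
      obtain ⟨hne2, hmem2⟩ := hadj
      have huD : u ∈ D := by
        have hE := hsub _ hmem
        rw [SimpleGraph.mem_edgeSet] at hE
        rcases hbip.2.2 c u hE with ⟨-, h⟩ | ⟨h, -⟩
        · exact h
        · exact absurd h (Set.disjoint_left.mp hbip.1 hc)
      have := unique_edge hdeg huD hmem hmem2 (Sym2.mem_mk_right c u) (Sym2.mem_mk_left u x)
      rw [Sym2.eq_iff] at this
      rcases this with ⟨h, -⟩ | ⟨h, -⟩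
      · exact absurd h hne
      · exact h.symm
  have hwalk : ∀ c ∈ A, ∀ u v : V, (fromEdges M).Walk u v →
      (u = c ∨ (fromEdges M).Adj c u) → (v = c ∨ (fromEdges M).Adj c v) := by
    intro c hc u v p
    induction p with
    | nil => exact id
    | cons h p ih => exact fun hu => ih (hstep c hc _ _ hu h)
  intro v hv
  obtain ⟨e, heM, hve⟩ := hv
  obtain ⟨a, b, rfl, hab, haA, hbD⟩ := exists_AD hbip (hsub e heM)
  refine ⟨a, haA, ?_, ?_, ?_⟩
  · rcases Sym2.mem_iff.mp hve with rfl | rfl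
    · exact SimpleGraph.Reachable.refl _
    · exact SimpleGraph.Adj.reachable ⟨hab, heM⟩
  · intro u hu
    have hav : (fromEdges M).Reachable a v := by
      rcases Sym2.mem_iff.mp hve with rfl | rfl
      · exact SimpleGraph.Reachable.refl _
      · exact SimpleGraph.Adj.reachable ⟨hab, heM⟩
    obtain ⟨p⟩ := hav.trans hu.symm
    exact hwalk a haA a u p (Or.inl rfl)
  · intro e' he' ⟨x, hxe', hxv⟩
    have hav : (fromEdges M).Reachable a v := by
      rcases Sym2.mem_iff.mp hve with rfl | rfl
      · exact SimpleGraph.Reachable.refl _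
      · exact SimpleGraph.Adj.reachable ⟨hab, heM⟩
    obtain ⟨p⟩ := hav.trans hxv.symm
    rcases hwalk a haA a x p (Or.inl rfl) with rfl | hax
    · exact hxe'
    · obtain ⟨hne, hmem⟩ := hax
      have hxD : x ∈ D := by
        have hE := hsub _ hmem
        rw [SimpleGraph.mem_edgeSet] at hE
        rcases hbip.2.2 a x hE with ⟨-, h⟩ | ⟨h, -⟩
        · exact h
        · exact absurd h (Set.disjoint_left.mp hbip.1 haA)
      have := unique_edge hdeg hxD he' hmem hxe' (Sym2.mem_mk_right a x)
      rw [this]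
      exact Sym2.mem_mk_left a x

lemma unique_edge' {M : Finset (Sym2 V)} {x : V} (h : degM M x ≤ 1)
    {e1 e2 : Sym2 V} (h1 : e1 ∈ M) (h2 : e2 ∈ M) (hx1 : x ∈ e1) (hx2 : x ∈ e2) :
    e1 = e2 := by
  classical
  rw [degM_eq, Finset.card_le_one] at h
  exact h e1 (Finset.mem_filter.mpr ⟨h1, hx1⟩) e2 (Finset.mem_filter.mpr ⟨h2, hx2⟩)

lemma fin_filter_card (n : ℕ) (j r : ℕ) (hj : j ≤ n) (hr : r < 2) :
    (Finset.univ.filter fun i : Fin n => (i : ℕ) % 2 = r ∧ (j = (i : ℕ) ∨ j = (i : ℕ) + 1)).card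
      = if (j % 2 = r ∧ j < n) ∨ (j % 2 ≠ r ∧ 0 < j) then 1 else 0 := by
  split_ifs with h
  · rcases h with ⟨hpar, hlt⟩ | ⟨hpar, hpos⟩
    · rw [Finset.card_eq_one]
      refine ⟨⟨j, hlt⟩, ?_⟩
      ext i
      have hi := i.isLt
      simp only [Finset.mem_filter, Finset.mem_univ, true_and, Finset.mem_singleton,
        Fin.ext_iff]
      omega
    · rw [Finset.card_eq_one]
      refine ⟨⟨j - 1, by omega⟩, ?_⟩
      ext i
      have hi := i.isLt
      simp only [Finset.mem_filter, Finset.mem_univ, true_and, Finset.mem_singleton,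
        Fin.ext_iff]
      omega
  · rw [Finset.card_eq_zero, Finset.filter_eq_empty_iff]
    intro i _
    have hi := i.isLt
    omega


/-- the transformation `M_c Δ E(P_uv)` of a minimal matching `D*`-cover with
respect to a switching path is again a minimal matching `D*`-cover with the same centers;
the degree of `u` drops by one, the degree of `v` rises by one, and all other centers keep
their degree. -/
theorem transformation_of_switching_path (Gb : SimpleGraph V) (A D : Set V)
    (hbip : IsBipartition Gb A D)
    (Mc : Finset (Sym2 V)) (hmin : IsMinimalMDCover Gb D Mc) (hcen : CentersInA A Mc)
    (n : ℕ) (w : Fin (n + 1) → V) (hsw : IsSwitchingPath Gb A Mc n w) :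
    IsMinimalMDCover Gb D ((Mc \ pathEdges n w) ∪ (pathEdges n w \ Mc)) ∧
    CentersInA A ((Mc \ pathEdges n w) ∪ (pathEdges n w \ Mc)) ∧
    degM ((Mc \ pathEdges n w) ∪ (pathEdges n w \ Mc)) (w 0) + 1 = degM Mc (w 0) ∧
    degM ((Mc \ pathEdges n w) ∪ (pathEdges n w \ Mc)) (w (Fin.last n)) =
      degM Mc (w (Fin.last n)) + 1 ∧
    ∀ x ∈ A, x ≠ w 0 → x ≠ w (Fin.last n) →
      degM ((Mc \ pathEdges n w) ∪ (pathEdges n w \ Mc)) x = degM Mc x := by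
  classical
  obtain ⟨hn, hinj, hadjP, hedge, hvert, hlastA, hmaxc, hdegge⟩ := hsw
  set P := pathEdges n w with hP
  set E : Fin n → Sym2 V := fun i => s(w i.castSucc, w i.succ) with hE
  set M' := (Mc \ P) ∪ (P \ Mc) with hM'
  -- basic parity facts
  have hnm : n % 2 = 0 := by
    have h := (hvert (Fin.last n)).mpr
    have h2 := (hvert (Fin.last n)).mp hlastA
    rw [Fin.val_last] at h2
    exact Nat.even_iff.mp h2
  have hn2 : 2 ≤ n := by omega
  -- facts about Mc
  have hMcsub : ∀ e ∈ Mc, e ∈ Gb.edgeSet := (isMDCoverSet_iff.mp hmin.1).1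
  have hMccov : ∀ v ∈ D, v ∈ edgeCover Mc := (isMDCoverSet_iff.mp hmin.1).2
  have hpriv := private_of_minimal hmin
  have hMcdeg : ∀ d ∈ D, degM Mc d ≤ 1 := by
    intro d hd
    rw [degM_eq, Finset.card_le_one]
    intro e1 h1 e2 h2
    rw [Finset.mem_filter] at h1 h2
    obtain ⟨v, hvD, hve, huniq⟩ := hpriv e1 h1.1
    have hvd : v = d := unique_D_mem hbip (hMcsub _ h1.1) hve h1.2 hvD hd
    subst hvd
    exact (huniq e2 h2.1 h2.2).symm
  -- facts about the path
  have hEdef : ∀ i : Fin n, E i = s(w i.castSucc, w i.succ) := fun i => by rw [hE]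
  have hPmem : ∀ e, e ∈ P ↔ ∃ i : Fin n, E i = e := by
    intro e
    rw [hP]
    simp only [pathEdges, Finset.mem_image, Finset.mem_univ, true_and, hE]
  have hEP : ∀ i : Fin n, E i ∈ P := fun i => (hPmem (E i)).mpr ⟨i, rfl⟩
  have hEMc : ∀ i : Fin n, E i ∈ Mc ↔ (i : ℕ) % 2 = 0 := by
    intro i
    rw [hEdef i]
    exact (hedge i).trans Nat.even_iff
  have hEinj : Function.Injective E := by
    intro i j h
    simp only [hE, Sym2.eq_iff, hinj.eq_iff, Fin.ext_iff, Fin.coe_castSucc,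
      Fin.val_succ] at h
    rcases h with ⟨h1, -⟩ | ⟨h1, h2⟩
    · exact Fin.ext h1
    · omega
  have hxE : ∀ (j : Fin (n + 1)) (i : Fin n),
      w j ∈ E i ↔ ((j : ℕ) = (i : ℕ) ∨ (j : ℕ) = (i : ℕ) + 1) := by
    intro j i
    simp only [hE, Sym2.mem_iff, hinj.eq_iff, Fin.ext_iff, Fin.coe_castSucc, Fin.val_succ]
  have hDodd : ∀ j : Fin (n + 1), (j : ℕ) % 2 = 1 → w j ∈ D := by
    intro j hj
    have hnA : w j ∉ A := fun h => by
      have := Nat.even_iff.mp ((hvert j).mp h); omega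
    have hmem : w j ∈ A ∪ D := by rw [hbip.2.1]; trivial
    exact hmem.resolve_left hnA
  have hAeven : ∀ j : Fin (n + 1), (j : ℕ) % 2 = 0 → w j ∈ A := by
    intro j hj
    exact (hvert j).mpr (Nat.even_iff.mpr hj)
  -- degree decompositions
  have hdisj : Disjoint (Mc \ P) (P \ Mc) := by
    rw [Finset.disjoint_left]
    intro e he1 he2
    exact (Finset.mem_sdiff.mp he1).2 (Finset.mem_sdiff.mp he2).1
  have hdegsplit : ∀ x, degM M' x = degM (Mc \ P) x + degM (P \ Mc) x := by
    intro x
    rw [hM', degM_eq, degM_eq, degM_eq, Finset.filter_union,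
      Finset.card_union_of_disjoint (Finset.disjoint_filter_filter hdisj)]
  have hdegMc : ∀ x, degM Mc x = degM (Mc \ P) x + degM (Mc ∩ P) x := by
    intro x
    conv_lhs => rw [← Finset.sdiff_union_inter Mc P]
    rw [degM_eq, degM_eq, degM_eq, Finset.filter_union,
      Finset.card_union_of_disjoint (Finset.disjoint_filter_filter
        (Finset.sdiff_disjoint.mono_right Finset.inter_subset_right))]
  -- counting path edges at a vertex
  have hcE : ∀ x : V, degM (Mc ∩ P) x =
      (Finset.univ.filter fun i : Fin n => (i : ℕ) % 2 = 0 ∧ x ∈ E i).card := by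
    intro x
    rw [degM_eq, ← Finset.card_image_of_injective
      (Finset.univ.filter fun i : Fin n => (i : ℕ) % 2 = 0 ∧ x ∈ E i) hEinj]
    congr 1
    ext e
    simp only [Finset.mem_filter, Finset.mem_inter, Finset.mem_image, Finset.mem_univ,
      true_and]
    constructor
    · rintro ⟨⟨hMc, hPe⟩, hx⟩
      obtain ⟨i, rfl⟩ := (hPmem e).mp hPe
      exact ⟨i, ⟨(hEMc i).mp hMc, hx⟩, rfl⟩
    · rintro ⟨i, ⟨hev, hx⟩, rfl⟩
      exact ⟨⟨(hEMc i).mpr hev, hEP i⟩, hx⟩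
  have hcO : ∀ x : V, degM (P \ Mc) x =
      (Finset.univ.filter fun i : Fin n => (i : ℕ) % 2 = 1 ∧ x ∈ E i).card := by
    intro x
    rw [degM_eq, ← Finset.card_image_of_injective
      (Finset.univ.filter fun i : Fin n => (i : ℕ) % 2 = 1 ∧ x ∈ E i) hEinj]
    congr 1
    ext e
    simp only [Finset.mem_filter, Finset.mem_sdiff, Finset.mem_image, Finset.mem_univ,
      true_and]
    constructor
    · rintro ⟨⟨hPe, hMc⟩, hx⟩
      obtain ⟨i, rfl⟩ := (hPmem e).mp hPe
      have : ¬ (i : ℕ) % 2 = 0 := fun h => hMc ((hEMc i).mpr h)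
      exact ⟨i, ⟨by omega, hx⟩, rfl⟩
    · rintro ⟨i, ⟨hod, hx⟩, rfl⟩
      refine ⟨⟨hEP i, fun h => ?_⟩, hx⟩
      have := (hEMc i).mp h
      omega
  have hfilter_wj : ∀ (j : Fin (n + 1)) (r : ℕ),
      (Finset.univ.filter fun i : Fin n => (i : ℕ) % 2 = r ∧ w j ∈ E i) =
      (Finset.univ.filter fun i : Fin n =>
        (i : ℕ) % 2 = r ∧ ((j : ℕ) = (i : ℕ) ∨ (j : ℕ) = (i : ℕ) + 1)) := by
    intro j r
    ext i
    simp only [Finset.mem_filter, hxE j i]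
  have hcEj : ∀ j : Fin (n + 1), degM (Mc ∩ P) (w j) =
      if ((j : ℕ) % 2 = 0 ∧ (j : ℕ) < n) ∨ ((j : ℕ) % 2 ≠ 0 ∧ 0 < (j : ℕ)) then 1 else 0 := by
    intro j
    rw [hcE, hfilter_wj j 0, fin_filter_card n (j : ℕ) 0 (by omega) (by omega)]
  have hcOj : ∀ j : Fin (n + 1), degM (P \ Mc) (w j) =
      if ((j : ℕ) % 2 = 1 ∧ (j : ℕ) < n) ∨ ((j : ℕ) % 2 ≠ 1 ∧ 0 < (j : ℕ)) then 1 else 0 := by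
    intro j
    rw [hcO, hfilter_wj j 1, fin_filter_card n (j : ℕ) 1 (by omega) (by omega)]
  have hznat : ((0 : Fin (n + 1)) : ℕ) = 0 := rfl
  have hlnat : ((Fin.last n) : ℕ) = n := rfl
  -- non-path vertices
  have hnotpath_even : ∀ x : V, (∀ j : Fin (n + 1), x ≠ w j) → degM (Mc ∩ P) x = 0 := by
    intro x hx
    rw [hcE, Finset.card_eq_zero, Finset.filter_eq_empty_iff]
    rintro i - ⟨-, hxi⟩
    rw [hEdef, Sym2.mem_iff] at hxi
    rcases hxi with h | h <;> exact hx _ h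
  have hnotpath_odd : ∀ x : V, (∀ j : Fin (n + 1), x ≠ w j) → degM (P \ Mc) x = 0 := by
    intro x hx
    rw [hcO, Finset.card_eq_zero, Finset.filter_eq_empty_iff]
    rintro i - ⟨-, hxi⟩
    rw [hEdef, Sym2.mem_iff] at hxi
    rcases hxi with h | h <;> exact hx _ h
  -- odd path vertices are interior, in D, and their Mc-edge lies on the path
  have hoddlt : ∀ j : Fin (n + 1), (j : ℕ) % 2 = 1 → (j : ℕ) < n := by
    intro j hj
    have := j.isLt
    omega
  have hMcP0odd : ∀ j : Fin (n + 1), (j : ℕ) % 2 = 1 → degM (Mc \ P) (w j) = 0 := by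
    intro j hj
    have h1 := hdegMc (w j)
    have h2 := hMcdeg (w j) (hDodd j hj)
    have h3 := hcEj j
    rw [if_pos (Or.inr ⟨by omega, by omega⟩)] at h3
    omega
  -- M' basic properties
  have hM'sub : ∀ e ∈ M', e ∈ Gb.edgeSet := by
    intro e he
    rcases Finset.mem_union.mp he with h | h
    · exact hMcsub e (Finset.mem_sdiff.mp h).1
    · obtain ⟨i, rfl⟩ := (hPmem e).mp (Finset.mem_sdiff.mp h).1
      rw [hEdef]
      exact (hadjP i)
  have hM'cov : ∀ v ∈ D, v ∈ edgeCover M' := by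
    intro v hv
    obtain ⟨e, he, hve⟩ := hMccov v hv
    by_cases hPe : e ∈ P
    · obtain ⟨i, rfl⟩ := (hPmem e).mp hPe
      have hie : (i : ℕ) % 2 = 0 := (hEMc i).mp he
      have hv2 : v = w i.succ := by
        rw [hEdef, Sym2.mem_iff] at hve
        rcases hve with rfl | rfl
        · exfalso
          have hA : w i.castSucc ∈ A := hAeven i.castSucc (by simp [hie])
          exact Set.disjoint_left.mp hbip.1 hA hv
        · rfl
      subst hv2
      have hlt : (i : ℕ) + 1 < n := by
        have := i.isLt
        omega
      refine ⟨E ⟨(i : ℕ) + 1, hlt⟩, Finset.mem_union.mpr (Or.inr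
        (Finset.mem_sdiff.mpr ⟨hEP _, fun h => ?_⟩)), ?_⟩
      · have := (hEMc _).mp h
        simp at this
        omega
      · rw [hxE i.succ ⟨(i : ℕ) + 1, hlt⟩]
        left
        simp
    · exact ⟨e, Finset.mem_union.mpr (Or.inl (Finset.mem_sdiff.mpr ⟨he, hPe⟩)), hve⟩
  have hM'degD : ∀ d ∈ D, degM M' d ≤ 1 := by
    intro d hd
    by_cases hpath : ∃ j : Fin (n + 1), d = w j
    · obtain ⟨j, rfl⟩ := hpath
      have hjodd : (j : ℕ) % 2 = 1 := by
        rcases Nat.even_or_odd (j : ℕ) with hev | hod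
        · exact absurd (hAeven j (Nat.even_iff.mp hev))
            (fun h => Set.disjoint_left.mp hbip.1 h hd)
        · exact Nat.odd_iff.mp hod
      rw [hdegsplit, hMcP0odd j hjodd, hcOj j,
        if_pos (Or.inl ⟨hjodd, hoddlt j hjodd⟩)]
    · push_neg at hpath
      rw [hdegsplit, hnotpath_odd _ hpath]
      have hle : degM (Mc \ P) d ≤ degM Mc d := by
        rw [degM_eq, degM_eq]
        exact Finset.card_le_card (Finset.filter_subset_filter _ Finset.sdiff_subset)
      have := hMcdeg d hd
      omega
  have hM'priv : ∀ e ∈ M', ∃ v ∈ D, v ∈ e ∧ ∀ e' ∈ M', v ∈ e' → e' = e := by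
    intro e he
    rcases Finset.mem_union.mp he with h | h
    · obtain ⟨heMc, hePnot⟩ := Finset.mem_sdiff.mp h
      obtain ⟨v, hvD, hve, huniq⟩ := hpriv e heMc
      have hvnot : ∀ j : Fin (n + 1), v ≠ w j := by
        intro j hvj
        have hjodd : (j : ℕ) % 2 = 1 := by
          rcases Nat.even_or_odd (j : ℕ) with hev | hod
          · exact absurd (hAeven j (Nat.even_iff.mp hev))
              (fun hA => Set.disjoint_left.mp hbip.1 hA (hvj ▸ hvD))
          · exact Nat.odd_iff.mp hod
        have hjn : (j : ℕ) < n := hoddlt j hjodd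
        have hj1 : (j : ℕ) - 1 < n := by omega
        have hmem : v ∈ E ⟨(j : ℕ) - 1, hj1⟩ := by
          rw [hvj, hxE]
          right
          simp
          omega
        have hMcmem : E ⟨(j : ℕ) - 1, hj1⟩ ∈ Mc := (hEMc _).mpr (by simp; omega)
        exact hePnot ((huniq _ hMcmem hmem) ▸ hEP ⟨(j : ℕ) - 1, hj1⟩)
      refine ⟨v, hvD, hve, ?_⟩
      intro e' he' hve'
      rcases Finset.mem_union.mp he' with h' | h'
      · exact huniq e' (Finset.mem_sdiff.mp h').1 hve'
      · exfalso
        obtain ⟨i, rfl⟩ := (hPmem e').mp (Finset.mem_sdiff.mp h').1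
        rw [hEdef, Sym2.mem_iff] at hve'
        rcases hve' with h'' | h'' <;> exact hvnot _ h''
    · obtain ⟨hePe, heMc⟩ := Finset.mem_sdiff.mp h
      obtain ⟨i, rfl⟩ := (hPmem _).mp hePe
      have hio : (i : ℕ) % 2 = 1 := by
        rcases Nat.even_or_odd (i : ℕ) with hev | hod
        · exact absurd ((hEMc i).mpr (Nat.even_iff.mp hev)) heMc
        · exact Nat.odd_iff.mp hod
      have hiD : w i.castSucc ∈ D := hDodd i.castSucc (by simp [hio])
      have hmemE : w i.castSucc ∈ E i := by
        rw [hEdef]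
        exact Sym2.mem_mk_left _ _
      have hEiM' : E i ∈ M' := Finset.mem_union.mpr (Or.inr (Finset.mem_sdiff.mpr ⟨hePe, heMc⟩))
      refine ⟨w i.castSucc, hiD, hmemE, ?_⟩
      intro e' he' hve'
      exact unique_edge' (hM'degD _ hiD) he' hEiM' hve' hmemE
  refine ⟨minimal_of_private hM'sub hM'cov hM'priv,
    centersInA_of_deg_le_one hbip hM'sub hM'degD, ?_, ?_, ?_⟩
  · -- degree of w 0 drops by one
    have h1 := hcEj 0
    have h2 := hcOj 0
    rw [hznat, if_pos (Or.inl ⟨by omega, by omega⟩)] at h1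
    rw [hznat, if_neg (by omega)] at h2
    rw [hdegsplit, hdegMc (w 0), h1, h2]
  · -- degree of w (last n) rises by one
    have h1 := hcEj (Fin.last n)
    have h2 := hcOj (Fin.last n)
    rw [hlnat, if_neg (by omega)] at h1
    rw [hlnat, if_pos (Or.inr ⟨by omega, by omega⟩)] at h2
    rw [hdegsplit, hdegMc (w (Fin.last n)), h1, h2]
  · -- other centers keep their degree
    intro x hxA hx0 hxl
    by_cases hpath : ∃ j : Fin (n + 1), x = w j
    · obtain ⟨j, rfl⟩ := hpath
      have hje : (j : ℕ) % 2 = 0 := Nat.even_iff.mp ((hvert j).mp hxA)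
      have hj0 : (j : ℕ) ≠ 0 := fun h => hx0 (congrArg w (Fin.ext (h.trans hznat.symm)))
      have hjn : (j : ℕ) ≠ n := fun h => hxl (congrArg w (Fin.ext (h.trans hlnat.symm)))
      have hjlt : (j : ℕ) < n := by have := j.isLt; omega
      have h1 := hcEj j
      have h2 := hcOj j
      rw [if_pos (Or.inl ⟨hje, hjlt⟩)] at h1
      rw [if_pos (Or.inr ⟨by omega, by omega⟩)] at h2
      rw [hdegsplit, hdegMc (w j), h1, h2]
    · push_neg at hpath
      rw [hdegsplit, hdegMc x, hnotpath_even x hpath, hnotpath_odd x hpath]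
end
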